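/- arXiv:2601.18942 — 2 statements merged into one kernel-verified Lean document; each statement's English description precedes it below -/
import Mathlib

section
/- Fix a ∈ (0,1] and s ∈ (0,1]. The stationary Gate-Opened probability π_3(p,a,s) = p·s / ((1−p)·(1 + p/a + p) + p·s) is strictly increasing in p on the interval (0,1): if 0 < p₁ < p₂ < 1 then π_3(p₁,a,s) < π_3(p₂,a,s). -/
/-- Stationary Gate-Opened probability of the pathfinder Markov chain. -/
noncomputable def pi3 (p a s : ℝ) : ℝ :=
  p * s / ((1 - p) * (1 + p / a + p) + p * s)

noncomputable def pi3Denom (p a s : ℝ) : ℝ :=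
  (1 - p) * (1 + p / a + p) + p * s

theorem pi3_eq_div_pi3Denom (p a s : ℝ) : pi3 p a s = p * s / pi3Denom p a s := rfl

theorem pi3Denom_pos {p a s : ℝ} (ha : 0 ≤ a) (hs : 0 ≤ s) (hp₀ : 0 ≤ p) (hp₁ : p < 1) :
    0 < pi3Denom p a s := by
  unfold pi3Denom
  have := sub_pos.2 hp₁
  positivity

theorem mul_pi3Denom_sub_mul_pi3Denom (p₁ p₂ a s : ℝ) :
    p₂ * pi3Denom p₁ a s - p₁ * pi3Denom p₂ a s = (p₂ - p₁) * (1 + (1 + 1 / a) * p₁ * p₂) := by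
  unfold pi3Denom
  ring

theorem stmt_3 (a s : ℝ) (ha : a ∈ Set.Ioc (0:ℝ) 1) (hs : s ∈ Set.Ioc (0:ℝ) 1)
    (p₁ p₂ : ℝ) (h1 : 0 < p₁) (h12 : p₁ < p₂) (h2 : p₂ < 1) :
    pi3 p₁ a s < pi3 p₂ a s := by
  obtain ⟨ha, -⟩ := ha
  obtain ⟨hs, -⟩ := hs
  have hD₁ := pi3Denom_pos (s := s) ha.le hs.le h1.le (h12.trans h2)
  have hD₂ := pi3Denom_pos (s := s) ha.le hs.le (h1.trans h12).le h2
  have hgap : 0 < p₂ * pi3Denom p₁ a s - p₁ * pi3Denom p₂ a s := by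
    rw [mul_pi3Denom_sub_mul_pi3Denom]
    have hp₂ := h1.trans h12
    exact mul_pos (sub_pos.2 h12) (by positivity)
  rw [pi3_eq_div_pi3Denom, pi3_eq_div_pi3Denom, div_lt_div_iff₀ hD₁ hD₂]
  linarith [mul_pos hs hgap]
end

section
/- Let β > 0, U⁻ < 0 < U⁺, n ≥ 1 a natural number, ε > 0, and δ ∈ (0,1). Suppose α*, α** ∈ [0,1] satisfy W(α*) = δ and W_sys(α**) = δ. Then α** > α*: selfless behavior strictly raises the tipping point, so the system tolerates a strictly larger proportion of rejective flights at the same failure tolerance δ. -/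
/-!
Write `W_t(α) = m_t(α)^n`, where `m_t(α)` mixes the two logistic rejection probabilities
`σ(U⁻ + t) > σ(U⁺ + t)`, with `σ(u) = 1 / (1 + exp (β u))` strictly decreasing. Since `m_t ≥ 0` and
`n ≥ 1`, the two equations give `m_0(α*) = m_ε(α**)`. Shifting by `ε > 0` lowers both probabilities,
so `m_ε(α**) < m_0(α**)`; hence `m_0(α*) < m_0(α**)`, and `m_0` is strictly increasing in `α`.
-/


/-- Worst-case collective rejection probability with representative utilities
shifted by `t` (baseline corresponds to `t = 0`, selfless case to `t = ε > 0`). -/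
noncomputable def Wshift (β Um Up : ℝ) (n : ℕ) (t α : ℝ) : ℝ :=
  (α * (1 / (1 + Real.exp (β * (Um + t)))) +
    (1 - α) * (1 / (1 + Real.exp (β * (Up + t))))) ^ n

section ConvexCombination

variable {a b a' b' α : ℝ}

theorem convex_combination_nonneg (ha : 0 ≤ a) (hb : 0 ≤ b) (hα₀ : 0 ≤ α) (hα₁ : α ≤ 1) :
    0 ≤ α * a + (1 - α) * b := by
  have : 0 ≤ 1 - α := sub_nonneg.2 hα₁
  positivity

theorem convex_combination_lt_convex_combination (ha : a' < a) (hb : b' < b)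
    (hα₀ : 0 ≤ α) (hα₁ : α ≤ 1) :
    α * a' + (1 - α) * b' < α * a + (1 - α) * b := by
  nlinarith [mul_nonneg hα₀ (sub_pos.2 ha).le, mul_nonneg (sub_nonneg.2 hα₁) (sub_pos.2 hb).le]

theorem strictMono_convex_combination (hba : b < a) :
    StrictMono fun α : ℝ => α * a + (1 - α) * b := by
  intro α₁ α₂ h
  nlinarith

end ConvexCombination

noncomputable def logisticReject (β u : ℝ) : ℝ :=
  1 / (1 + Real.exp (β * u))

theorem logisticReject_nonneg (β u : ℝ) : 0 ≤ logisticReject β u := by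
  unfold logisticReject
  positivity

theorem logisticReject_strictAnti {β : ℝ} (hβ : 0 < β) : StrictAnti (logisticReject β) := by
  intro u v huv
  have hexp : Real.exp (β * u) < Real.exp (β * v) :=
    Real.exp_lt_exp.2 (mul_lt_mul_of_pos_left huv hβ)
  exact one_div_lt_one_div_of_lt (by positivity) (by linarith)

noncomputable def rejectionMix (β Um Up t α : ℝ) : ℝ :=
  α * logisticReject β (Um + t) + (1 - α) * logisticReject β (Up + t)

theorem Wshift_eq_rejectionMix_pow (β Um Up : ℝ) (n : ℕ) (t α : ℝ) :
    Wshift β Um Up n t α = rejectionMix β Um Up t α ^ n :=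
  rfl

section RejectionMix

variable {β Um Up t α : ℝ}

theorem rejectionMix_nonneg (hα : α ∈ Set.Icc (0 : ℝ) 1) : 0 ≤ rejectionMix β Um Up t α :=
  convex_combination_nonneg (logisticReject_nonneg _ _) (logisticReject_nonneg _ _) hα.1 hα.2

theorem rejectionMix_strictMono (hβ : 0 < β) (hU : Um < Up) :
    StrictMono (rejectionMix β Um Up t) :=
  strictMono_convex_combination (logisticReject_strictAnti hβ (by linarith))

theorem rejectionMix_strictAnti_shift (hβ : 0 < β) (hα : α ∈ Set.Icc (0 : ℝ) 1) :
    StrictAnti fun t => rejectionMix β Um Up t α := fun _ _ h =>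
  convex_combination_lt_convex_combination (logisticReject_strictAnti hβ (by linarith))
    (logisticReject_strictAnti hβ (by linarith)) hα.1 hα.2

end RejectionMix

theorem stmt_15_general (β Um Up : ℝ) (hβ : 0 < β) (hUm : Um < 0) (hUp : 0 < Up)
    (n : ℕ) (hn : 1 ≤ n) (ε : ℝ) (hε : 0 < ε) (δ : ℝ)
    (αstar αstarstar : ℝ)
    (hαstar : αstar ∈ Set.Icc (0:ℝ) 1) (hαss : αstarstar ∈ Set.Icc (0:ℝ) 1)
    (hbase : Wshift β Um Up n 0 αstar = δ)
    (hsys : Wshift β Um Up n ε αstarstar = δ) :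
    αstar < αstarstar := by
  rw [Wshift_eq_rejectionMix_pow] at hbase hsys
  have hmix : rejectionMix β Um Up 0 αstar = rejectionMix β Um Up ε αstarstar :=
    (pow_left_inj₀ (rejectionMix_nonneg hαstar) (rejectionMix_nonneg hαss) (by omega)).1
      (hbase.trans hsys.symm)
  have hshift : rejectionMix β Um Up ε αstarstar < rejectionMix β Um Up 0 αstarstar :=
    rejectionMix_strictAnti_shift hβ hαss hε
  exact (rejectionMix_strictMono hβ (hUm.trans hUp)).lt_iff_lt.1 (hmix ▸ hshift)

theorem stmt_15 (β Um Up : ℝ) (hβ : 0 < β) (hUm : Um < 0) (hUp : 0 < Up)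
    (n : ℕ) (hn : 1 ≤ n) (ε : ℝ) (hε : 0 < ε) (δ : ℝ) (hδ : δ ∈ Set.Ioo (0:ℝ) 1)
    (αstar αstarstar : ℝ)
    (hαstar : αstar ∈ Set.Icc (0:ℝ) 1) (hαss : αstarstar ∈ Set.Icc (0:ℝ) 1)
    (hbase : Wshift β Um Up n 0 αstar = δ)
    (hsys : Wshift β Um Up n ε αstarstar = δ) :
    αstar < αstarstar :=
  stmt_15_general β Um Up hβ hUm hUp n hn ε hε δ αstar αstarstar hαstar hαss hbase hsys
end
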